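/- arXiv:1204.3487 — 5 statements merged into one kernel-verified Lean document; each statement's English description precedes it below -/
import Mathlib

section
/- Let f be a rational function on a finite connected graph G with at least two vertices, and let Z be the set of vertices where f attains its minimum value. Then div(f)(Z) ≤ −(Z·Z^c), and for every v ∈ Z one has div(f)(v) ≤ 0, where Z^c = V(G) \ Z and (Z·Z^c) is the number of edges between Z and its complement. -/
open Finset

/-- The order of the rational function `f` at the vertex `v`, for the graph with
edge multiplicities `m`:  `ord_v(f) = ∑_{w ≠ v} (f(v) - f(w))·(v·w)`. -/
def ordAt {V : Type*} [Fintype V] (m : V → V → ℕ) (f : V → ℤ) (v : V) : ℤ :=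
  ∑ w, (f v - f w) * (m v w : ℤ)

/-- The divisor of the rational function `f`. -/
def divOf {V : Type*} [Fintype V] (m : V → V → ℕ) (f : V → ℤ) : V → ℤ :=
  fun v => ordAt m f v

/-- The degree of a divisor. -/
def degOf {V : Type*} [Fintype V] (d : V → ℤ) : ℤ := ∑ v, d v

/-- A divisor is principal if it is the divisor of some rational function. -/
def IsPrincipal {V : Type*} [Fintype V] (m : V → V → ℕ) (d : V → ℤ) : Prop :=
  ∃ f : V → ℤ, d = divOf m f

/-- Linear equivalence of divisors. -/
def LinEquiv {V : Type*} [Fintype V] (m : V → V → ℕ) (d d' : V → ℤ) : Prop :=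
  IsPrincipal m (d - d')

/-- `rankGE m d k` : every effective divisor of degree `k` is dominated by some
divisor linearly equivalent to `d`. -/
def rankGE {V : Type*} [Fintype V] (m : V → V → ℕ) (d : V → ℤ) (k : ℕ) : Prop :=
  ∀ e : V → ℤ, (∀ v, 0 ≤ e v) → degOf e = (k : ℤ) →
    ∃ d' : V → ℤ, LinEquiv m d d' ∧ ∀ v, e v ≤ d' v

/-- The Baker–Norine combinatorial rank of a divisor: the largest `k ≥ 0` such that
every effective divisor of degree `k` is dominated by a divisor equivalent to `d`,
and `-1` if there is no such `k`. -/
noncomputable def bnRank {V : Type*} [Fintype V] (m : V → V → ℕ) (d : V → ℤ) : ℤ :=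
  sSup ({-1} ∪ {k : ℤ | 0 ≤ k ∧ rankGE m d k.toNat})

/-- Connectivity of the (multi)graph with edge multiplicities `m`. -/
def Conn {V : Type*} [Fintype V] (m : V → V → ℕ) : Prop :=
  ∀ u v : V, Relation.ReflTransGen (fun a b => 0 < m a b) u v

/-- On the set `Z` of vertices where `f` attains its minimum, one has
`div(f)(Z) ≤ -(Z·Zᶜ)` and `div(f)(v) ≤ 0` for every `v ∈ Z`. -/
theorem div_at_minimum_set {V : Type*} [Fintype V] [DecidableEq V] (m : V → V → ℕ)
    (hsymm : ∀ v w, m v w = m w v) (hconn : Conn m) (hcard : 1 < Fintype.card V)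
    (f : V → ℤ) (Z : Finset V) (hZ : ∀ v : V, v ∈ Z ↔ ∀ w : V, f v ≤ f w) :
    (∑ v ∈ Z, divOf m f v ≤ -(∑ v ∈ Z, ∑ w ∈ Zᶜ, (m v w : ℤ))) ∧
    ∀ v ∈ Z, divOf m f v ≤ 0 := by
  have hmin : ∀ v ∈ Z, ∀ w, f v ≤ f w := fun v hv => (hZ v).1 hv
  have hstrict : ∀ v ∈ Z, ∀ w ∈ Zᶜ, f v < f w := by
    intro v hv w hw
    have hwZ : w ∉ Z := Finset.mem_compl.mp hw
    obtain ⟨u, hu⟩ := not_forall.mp (fun h => hwZ ((hZ w).2 h))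
    exact lt_of_le_of_lt (hmin v hv u) (lt_of_not_ge hu)
  have hsplit : ∀ v ∈ Z, divOf m f v = ∑ w ∈ Zᶜ, (f v - f w) * (m v w : ℤ) := by
    intro v hv
    show ∑ w, (f v - f w) * (m v w : ℤ) = _
    rw [← Finset.sum_add_sum_compl Z]
    have h0 : ∑ w ∈ Z, (f v - f w) * (m v w : ℤ) = 0 :=
      Finset.sum_eq_zero (fun w hw => by
        have : f v = f w := le_antisymm (hmin v hv w) (hmin w hw v)
        simp [this])
    rw [h0, zero_add]
  constructor
  · calc ∑ v ∈ Z, divOf m f v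
        ≤ ∑ v ∈ Z, -(∑ w ∈ Zᶜ, (m v w : ℤ)) := by
          apply Finset.sum_le_sum
          intro v hv
          rw [hsplit v hv, ← Finset.sum_neg_distrib]
          apply Finset.sum_le_sum
          intro w hw
          have h1 : f v - f w ≤ -1 := by have := hstrict v hv w hw; omega
          calc (f v - f w) * (m v w : ℤ) ≤ (-1) * (m v w : ℤ) :=
                mul_le_mul_of_nonneg_right h1 (Int.natCast_nonneg _)
            _ = -(m v w : ℤ) := by ring
      _ = -(∑ v ∈ Z, ∑ w ∈ Zᶜ, (m v w : ℤ)) := by rw [Finset.sum_neg_distrib]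
  · intro v hv
    rw [hsplit v hv]
    apply Finset.sum_nonpos
    intro w hw
    have h1 : f v - f w ≤ 0 := by have := hstrict v hv w hw; omega
    exact mul_nonpos_of_nonpos_of_nonneg h1 (Int.natCast_nonneg _)
end

section
/- Let G be a finite connected loopless weightless graph, fix an integer r ≥ 0, and let d be a divisor on G such that d(v) < r for some vertex v and d(Z) < (Z·Z^c) for every nonempty subset Z ⊆ V(G) \ {v}. Then r_G(d) ≤ r − 1. -/
/-!
Write `d - d' = div f` for a divisor `d'` linearly equivalent to `d` and let `Z` be the set where
`f` is maximal. Each `z ∈ Z` has `ord_z f ≥ (z·Zᶜ)`, so if `v ∉ Z` then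
`d'(Z) ≤ d(Z) - (Z·Zᶜ) < 0`, and `d'` is not effective away from `v`; if `v ∈ Z` then
`ord_v f ≥ 0` and `d'(v) ≤ d(v) < r`. Either way `d'` cannot dominate
`k·v` for any `k > d(v)`, in particular for any `k ≥ r`.
-/

open Finset

section

variable {V : Type*} [Fintype V]

lemma ordAt_nonneg_of_isMax (m : V → V → ℕ) {f : V → ℤ} {z : V} (hmax : ∀ w, f w ≤ f z) :
    0 ≤ ordAt m f z :=
  sum_nonneg fun w _ => mul_nonneg (sub_nonneg.2 (hmax w)) (Int.natCast_nonneg _)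

lemma sum_compl_le_ordAt [DecidableEq V] (m : V → V → ℕ) {f : V → ℤ} {Z : Finset V} {z : V}
    (hmax : ∀ w, f w ≤ f z) (hlt : ∀ w ∉ Z, f w < f z) :
    ∑ w ∈ Zᶜ, (m z w : ℤ) ≤ ordAt m f z := by
  rw [ordAt, ← sum_add_sum_compl Z]
  have hin : 0 ≤ ∑ w ∈ Z, (f z - f w) * (m z w : ℤ) :=
    sum_nonneg fun w _ => mul_nonneg (sub_nonneg.2 (hmax w)) (Int.natCast_nonneg _)
  have hout : ∑ w ∈ Zᶜ, (m z w : ℤ) ≤ ∑ w ∈ Zᶜ, (f z - f w) * (m z w : ℤ) :=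
    sum_le_sum fun w hw =>
      le_mul_of_one_le_left (Int.natCast_nonneg _) (by linarith [hlt w (mem_compl.1 hw)])
  linarith

lemma apply_le_of_linEquiv [DecidableEq V] {m : V → V → ℕ} {d d' : V → ℤ} {v : V}
    (hZ : ∀ Z : Finset V, Z.Nonempty → v ∉ Z →
      ∑ w ∈ Z, d w < ∑ z ∈ Z, ∑ w ∈ Zᶜ, (m z w : ℤ))
    (hdd' : LinEquiv m d d') (hnonneg : ∀ w, w ≠ v → 0 ≤ d' w) : d' v ≤ d v := by
  obtain ⟨f, hf⟩ := hdd'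
  have hd' : ∀ w, d' w = d w - ordAt m f w := fun w => by
    have := congrFun hf w
    simp only [Pi.sub_apply, divOf] at this
    linarith
  obtain ⟨u, -, hu⟩ := exists_max_image univ f ⟨v, mem_univ v⟩
  by_cases hvu : f v = f u
  · rw [hd' v]
    linarith [ordAt_nonneg_of_isMax m fun w => hvu ▸ hu w (mem_univ w)]
  set Z := univ.filter fun w => f w = f u
  have hvZ : v ∉ Z := by simp [Z, hvu]
  have hcut : ∑ z ∈ Z, ∑ w ∈ Zᶜ, (m z w : ℤ) ≤ ∑ z ∈ Z, ordAt m f z :=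
    sum_le_sum fun z hz => by
      have hz : f z = f u := (mem_filter.1 hz).2
      refine sum_compl_le_ordAt m (fun w => hz ▸ hu w (mem_univ w)) fun w hw => ?_
      exact hz ▸ lt_of_le_of_ne (hu w (mem_univ w)) (by simpa [Z] using hw)
  have hpos : 0 ≤ ∑ z ∈ Z, d' z :=
    sum_nonneg fun z hz => hnonneg z fun h => hvZ (h ▸ hz)
  have hsum : ∑ z ∈ Z, d' z = ∑ z ∈ Z, d z - ∑ z ∈ Z, ordAt m f z := by
    rw [← sum_sub_distrib]
    exact sum_congr rfl fun z _ => hd' z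
  linarith [hZ Z ⟨u, by simp [Z]⟩ hvZ]

lemma not_rankGE_of_lt [DecidableEq V] {m : V → V → ℕ} {d : V → ℤ} {v : V}
    (hZ : ∀ Z : Finset V, Z.Nonempty → v ∉ Z →
      ∑ w ∈ Z, d w < ∑ z ∈ Z, ∑ w ∈ Zᶜ, (m z w : ℤ))
    {k : ℕ} (hk : d v < k) : ¬ rankGE m d k := by
  intro hrank
  obtain ⟨d', hdd', hdom⟩ :=
    hrank (Pi.single v k) (fun w => by by_cases h : w = v <;> simp [h]) (by simp [degOf])
  have hnonneg : ∀ w, w ≠ v → 0 ≤ d' w := fun w hw => by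
    simpa [Pi.single_apply, hw] using hdom w
  have hkv : (k : ℤ) ≤ d' v := by simpa using hdom v
  linarith [apply_le_of_linEquiv hZ hdd' hnonneg]

lemma bnRank_le {m : V → V → ℕ} {d : V → ℤ} {n : ℤ} (hn : -1 ≤ n)
    (h : ∀ k : ℕ, n < k → ¬ rankGE m d k) : bnRank m d ≤ n := by
  refine csSup_le ⟨-1, Set.mem_union_left _ rfl⟩ ?_
  rintro x (rfl | ⟨hx0, hx⟩)
  · exact hn
  · by_contra! hnx
    exact h x.toNat (by omega) hx

end

theorem bnRank_le_of_small_general {V : Type*} [Fintype V] [DecidableEq V] (m : V → V → ℕ)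
    (r : ℤ) (hr : 0 ≤ r) (d : V → ℤ) (v : V) (hv : d v < r)
    (hZ : ∀ Z : Finset V, Z.Nonempty → v ∉ Z →
      ∑ w ∈ Z, d w < ∑ z ∈ Z, ∑ w ∈ Zᶜ, (m z w : ℤ)) :
    bnRank m d ≤ r - 1 :=
  bnRank_le (by omega) fun _ hk => not_rankGE_of_lt hZ (by omega)

/-- If `d(v) < r` for some vertex `v` and `d(Z) < (Z·Zᶜ)` for every nonempty
`Z ⊆ V ∖ {v}`, then `r_G(d) ≤ r - 1`. -/
theorem bnRank_le_of_small {V : Type*} [Fintype V] [DecidableEq V] (m : V → V → ℕ)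
    (hsymm : ∀ v w, m v w = m w v) (hloop : ∀ v, m v v = 0) (hconn : Conn m)
    (hcard : 1 < Fintype.card V)
    (r : ℤ) (hr : 0 ≤ r) (d : V → ℤ) (v : V) (hv : d v < r)
    (hZ : ∀ Z : Finset V, Z.Nonempty → v ∉ Z →
      ∑ w ∈ Z, d w < ∑ z ∈ Z, ∑ w ∈ Zᶜ, (m z w : ℤ)) :
    bnRank m d ≤ r - 1 :=
  bnRank_le_of_small_general m r hr d v hv hZ
end

section
/- Clifford's theorem for graphs: if G is a finite connected loopless weightless graph of genus g and d is a divisor of degree d₀ with 0 ≤ d₀ ≤ 2g − 2 and r_G(d) ≥ 0, then r_G(d) ≤ d₀/2. -/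
open Finset

/-!
Clifford's inequality is formal once two facts are known: superadditivity of the rank,
`r(d) + r(K - d) ≤ r(K)`, and the Riemann–Roch inequality `r(d) ≥ deg d - g + 1 + r(K - d)`.
Applied to `d = 0` the latter gives `r(K) ≤ g - 1`, applied to `K - d` it bounds
`r(d) - r(K - d)`, and the two bounds add up to `2 r(d) ≤ deg d`; when `r(K - d) = -1` the
second bound alone suffices, because `deg d ≤ 2g - 2`.

The Riemann–Roch inequality follows Baker–Norine. Every divisor is equivalent to a `q`-reduced
one, Dhar's burning algorithm shows that a reduced divisor negative at `q` is dominated by the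
divisor `ν` of an acyclic orientation, and `ν` has degree `g - 1`, is equivalent to no effective
divisor, and adds up with the divisor of the reversed orientation to `K`.
-/

namespace ChipFiring

variable {V : Type*} [Fintype V]

section Divisors

variable (m : V → V → ℕ)

@[simp] lemma degOf_zero : degOf (0 : V → ℤ) = 0 := by simp [degOf]

@[simp] lemma degOf_add (d d' : V → ℤ) : degOf (d + d') = degOf d + degOf d' :=
  sum_add_distrib

@[simp] lemma degOf_sub (d d' : V → ℤ) : degOf (d - d') = degOf d - degOf d' :=
  sum_sub_distrib ..

@[simp] lemma degOf_single [DecidableEq V] (v : V) (c : ℤ) : degOf (Pi.single v c) = c := by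
  simp [degOf]

lemma degOf_mono {d d' : V → ℤ} (h : d ≤ d') : degOf d ≤ degOf d' :=
  sum_le_sum fun v _ => h v

lemma degOf_nonneg {e : V → ℤ} (he : 0 ≤ e) : 0 ≤ degOf e := by
  simpa using degOf_mono he

def divOfHom : (V → ℤ) →+ (V → ℤ) where
  toFun := divOf m
  map_zero' := by ext; simp [divOf, ordAt]
  map_add' f f' := by
    ext v
    simp only [divOf, ordAt, Pi.add_apply, ← sum_add_distrib]
    exact sum_congr rfl fun w _ => by ring

lemma divOf_add (f f' : V → ℤ) : divOf m (f + f') = divOf m f + divOf m f' :=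
  (divOfHom m).map_add f f'

lemma divOf_smul (c : ℤ) (f : V → ℤ) : divOf m (c • f) = c • divOf m f :=
  map_zsmul (divOfHom m) c f

lemma linEquiv_iff_sub_mem {d d' : V → ℤ} :
    LinEquiv m d d' ↔ d - d' ∈ (divOfHom m).range :=
  ⟨fun ⟨f, hf⟩ => ⟨f, hf.symm⟩, fun ⟨f, hf⟩ => ⟨f, hf.symm⟩⟩

lemma LinEquiv.refl (d : V → ℤ) : LinEquiv m d d :=
  (linEquiv_iff_sub_mem m).2 (by simp [zero_mem])

variable {m}

lemma LinEquiv.add {d₁ d₂ c₁ c₂ : V → ℤ} (h₁ : LinEquiv m d₁ c₁) (h₂ : LinEquiv m d₂ c₂) :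
    LinEquiv m (d₁ + d₂) (c₁ + c₂) := by
  rw [linEquiv_iff_sub_mem] at h₁ h₂ ⊢
  convert add_mem h₁ h₂ using 1
  abel

lemma exists_le_degOf_eq {e : V → ℤ} (he : 0 ≤ e) :
    ∀ a : ℕ, (a : ℤ) ≤ degOf e → ∃ e₁, 0 ≤ e₁ ∧ e₁ ≤ e ∧ degOf e₁ = a := by
  classical
  intro a
  induction a with
  | zero => exact fun _ => ⟨0, le_rfl, he, degOf_zero⟩
  | succ a ih =>
    intro ha
    obtain ⟨e₁, he₁, he₁e, hdeg⟩ := ih (by omega)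
    obtain ⟨v, hv⟩ : ∃ v, e₁ v < e v := by
      by_contra! h
      have := degOf_mono (show e ≤ e₁ from h)
      omega
    have hle : e₁ + Pi.single v 1 ≤ e := fun u => by
      rcases eq_or_ne u v with rfl | hu
      · simpa using hv
      · simpa [hu] using he₁e u
    exact ⟨_, add_nonneg he₁ (Pi.single_nonneg.2 zero_le_one), hle, by simp [hdeg]⟩

lemma rankGE_add {d₁ d₂ : V → ℤ} {a b : ℕ} (h₁ : rankGE m d₁ a) (h₂ : rankGE m d₂ b) :
    rankGE m (d₁ + d₂) (a + b) := by
  intro e he hdeg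
  obtain ⟨e₁, he₁, he₁e, hdeg₁⟩ :=
    exists_le_degOf_eq (fun v => he v) a (by push_cast at hdeg; omega)
  obtain ⟨c₁, hc₁, hle₁⟩ := h₁ e₁ he₁ hdeg₁
  obtain ⟨c₂, hc₂, hle₂⟩ := h₂ (e - e₁) (fun v => sub_nonneg.2 (he₁e v))
    (by push_cast at hdeg; simp [hdeg, hdeg₁])
  refine ⟨c₁ + c₂, LinEquiv.add hc₁ hc₂, fun v => ?_⟩
  have := add_le_add (hle₁ v) (hle₂ v)
  simpa using this

lemma rankGE_mono [Nonempty V] {d : V → ℤ} {j k : ℕ} (h : rankGE m d k) (hjk : j ≤ k) :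
    rankGE m d j := by
  classical
  intro e he hdeg
  let q : V := Classical.arbitrary V
  have hpad : (0 : V → ℤ) ≤ Pi.single q ((k : ℤ) - j) := Pi.single_nonneg.2 (by omega)
  obtain ⟨d', hd', hle⟩ := h (e + Pi.single q ((k : ℤ) - j)) (fun v => add_nonneg (he v) (hpad v))
    (by simp [hdeg])
  exact ⟨d', hd', fun v => le_trans (le_add_of_nonneg_right (hpad v)) (hle v)⟩

lemma bnRank_of_isEmpty [IsEmpty V] (d : V → ℤ) : bnRank m d = 0 := by
  refine Int.csSup_of_not_bddAbove fun ⟨B, hB⟩ => ?_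
  have := hB (show max B 0 + 1 ∈ ({-1} ∪ {k : ℤ | 0 ≤ k ∧ rankGE m d k.toNat}) from
    Or.inr ⟨by omega, fun _ _ _ => ⟨d, LinEquiv.refl m d, isEmptyElim⟩⟩)
  omega

variable (hsymm : ∀ v w, m v w = m w v)
include hsymm

/-- Inside `A` every edge is counted once in each direction, with opposite signs. -/
lemma sum_divOf_eq_sum_compl [DecidableEq V] (A : Finset V) (f : V → ℤ) :
    ∑ v ∈ A, divOf m f v = ∑ v ∈ A, ∑ w ∈ Aᶜ, (f v - f w) * (m v w : ℤ) := by
  have hA : ∑ v ∈ A, ∑ w ∈ A, (f v - f w) * (m v w : ℤ) = 0 := by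
    have h : ∑ v ∈ A, ∑ w ∈ A, (f v - f w) * (m v w : ℤ)
        = ∑ v ∈ A, ∑ w ∈ A, -((f v - f w) * (m v w : ℤ)) := by
      rw [sum_comm]
      exact sum_congr rfl fun v _ => sum_congr rfl fun w _ => by rw [hsymm w v]; ring
    simp only [sum_neg_distrib] at h
    linarith
  simp only [divOf, ordAt, ← sum_add_sum_compl A, sum_add_distrib, hA, zero_add]

lemma degOf_divOf (f : V → ℤ) : degOf (divOf m f) = 0 := by
  classical
  simpa [degOf] using sum_divOf_eq_sum_compl hsymm univ f

lemma LinEquiv.degOf_eq {d d' : V → ℤ} (h : LinEquiv m d d') : degOf d = degOf d' := by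
  obtain ⟨f, hf⟩ := h
  have := degOf_divOf hsymm f
  rw [← hf, degOf_sub] at this
  omega


lemma rankGE_le_degOf [Nonempty V] {d : V → ℤ} {k : ℕ} (h : rankGE m d k) :
    (k : ℤ) ≤ degOf d := by
  classical
  let q : V := Classical.arbitrary V
  have hk : (0 : V → ℤ) ≤ Pi.single q (k : ℤ) := Pi.single_nonneg.2 (by omega)
  obtain ⟨d', hd', hle⟩ := h (Pi.single q (k : ℤ)) hk (by simp)
  rw [LinEquiv.degOf_eq hsymm hd', ← degOf_single q (k : ℤ)]
  exact degOf_mono hle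

lemma bddAbove_rankSet [Nonempty V] (d : V → ℤ) :
    BddAbove ({-1} ∪ {k : ℤ | 0 ≤ k ∧ rankGE m d k.toNat}) := by
  refine ⟨|degOf d|, ?_⟩
  rintro k (rfl | ⟨hk, hrk⟩)
  · exact (neg_one_lt_zero.trans_le (abs_nonneg _)).le
  · have := rankGE_le_degOf hsymm hrk
    rw [Int.toNat_of_nonneg hk] at this
    exact this.trans (le_abs_self _)

lemma neg_one_le_bnRank [Nonempty V] (d : V → ℤ) : -1 ≤ bnRank m d :=
  le_csSup (bddAbove_rankSet hsymm d) (Or.inl rfl)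

lemma natCast_le_bnRank_iff [Nonempty V] {d : V → ℤ} {k : ℕ} :
    (k : ℤ) ≤ bnRank m d ↔ rankGE m d k := by
  refine ⟨fun hk => ?_, fun h => le_csSup (bddAbove_rankSet hsymm d) (Or.inr ⟨by omega, by simpa⟩)⟩
  rcases Int.csSup_mem ⟨-1, Or.inl rfl⟩ (bddAbove_rankSet hsymm d) with h | ⟨h0, hrk⟩
  · rw [bnRank, Set.mem_singleton_iff.1 h] at hk
    omega
  · exact rankGE_mono hrk (by unfold bnRank at hk; omega)

lemma bnRank_le_degOf [Nonempty V] {d : V → ℤ} (h : 0 ≤ bnRank m d) : bnRank m d ≤ degOf d := by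
  have := rankGE_le_degOf hsymm ((natCast_le_bnRank_iff hsymm).1 (Int.toNat_of_nonneg h).le)
  omega

lemma add_bnRank_le_bnRank_add [Nonempty V] {d₁ d₂ : V → ℤ} (h₁ : 0 ≤ bnRank m d₁)
    (h₂ : 0 ≤ bnRank m d₂) : bnRank m d₁ + bnRank m d₂ ≤ bnRank m (d₁ + d₂) := by
  have := (natCast_le_bnRank_iff hsymm).2 <| rankGE_add
    ((natCast_le_bnRank_iff hsymm).1 (Int.toNat_of_nonneg h₁).le)
    ((natCast_le_bnRank_iff hsymm).1 (Int.toNat_of_nonneg h₂).le)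
  push_cast at this
  omega

end Divisors

section Firing

variable [DecidableEq V]

/-- Peel `A` one vertex at a time, each satisfying `Q` relative to what lies outside the
remaining set; `t` records the peeling times. -/
lemma exists_peeling_order (Q : V → Finset V → Prop) (hQ : ∀ v ⦃B B'⦄, B ⊆ B' → Q v B → Q v B')
    (A : Finset V) (hA : ∀ A' ⊆ A, A'.Nonempty → ∃ v ∈ A', Q v A'ᶜ) :
    ∃ t : V → ℕ, ∀ v ∈ A, Q v (univ.filter fun w => t w < t v) := by
  induction A using Finset.strongInduction with
  | H A ih =>
    rcases A.eq_empty_or_nonempty with rfl | hne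
    · exact ⟨0, by simp⟩
    obtain ⟨v, hvA, hv⟩ := hA A subset_rfl hne
    obtain ⟨t, ht⟩ := ih (A.erase v) (erase_ssubset hvA)
      fun A' hA' => hA A' (hA'.trans (erase_subset v A))
    refine ⟨fun u => if u ∈ A then t u + 1 else 0, fun u hu => ?_⟩
    by_cases huv : u = v
    · subst huv
      refine hQ u (fun w hw => ?_) hv
      simp only [mem_compl] at hw
      simp [hw, hu]
    · refine hQ u (fun w hw => ?_) (ht u (mem_erase.2 ⟨huv, hu⟩))
      simp only [mem_filter, mem_univ, true_and] at hw ⊢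
      split_ifs <;> omega

variable (m : V → V → ℕ)

omit [Fintype V] in
lemma exists_mem_edge_compl (q : V) {A : Finset V} (hq : q ∉ A) {a : V} (ha : a ∈ A)
    (h : Relation.ReflTransGen (fun a b => 0 < m a b) a q) : ∃ v ∈ A, ∃ w ∉ A, 0 < m v w := by
  induction h using Relation.ReflTransGen.head_induction_on with
  | refl => exact absurd ha hq
  | @head a b hab _ ih =>
    by_cases hb : b ∈ A
    · exact ih hb
    · exact ⟨a, ha, b, hb, hab⟩

lemma exists_descent_function (hconn : Conn m) (q : V) :
    ∃ t : V → ℕ, ∀ v, v ≠ q → ∃ w, 0 < m v w ∧ t w < t v := by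
  obtain ⟨t, ht⟩ := exists_peeling_order (fun v B => ∃ w ∈ B, 0 < m v w)
    (fun _ _ _ hB ⟨w, hw, hvw⟩ => ⟨w, hB hw, hvw⟩) (univ.erase q)
    fun A' hA' ⟨a, ha⟩ => by
      obtain ⟨v, hv, w, hw, hvw⟩ :=
        exists_mem_edge_compl m q (fun hq => by simpa using hA' hq) ha (hconn a q)
      exact ⟨v, hv, w, mem_compl.2 hw, hvw⟩
  refine ⟨t, fun v hv => ?_⟩
  obtain ⟨w, hw, hvw⟩ := ht v (mem_erase.2 ⟨hv, mem_univ v⟩)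
  exact ⟨w, hvw, (mem_filter.1 hw).2⟩

/-- Firing by a potential that decays geometrically along a descent function makes every
vertex but `q` as negative as we like. -/
lemma exists_divOf_le_of_ne (hconn : Conn m) (q : V) (D : V → ℤ) :
    ∃ f : V → ℤ, ∀ v, v ≠ q → divOf m f v ≤ D v := by
  obtain ⟨t, ht⟩ := exists_descent_function m hconn q
  set c : ℤ := 1 + ∑ v, ∑ w, (m v w : ℤ)
  have hc : ∀ v, ∑ w, (m v w : ℤ) ≤ c - 1 := fun v => by
    simpa [c] using single_le_sum (f := fun v => ∑ w, (m v w : ℤ))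
      (fun _ _ => sum_nonneg fun _ _ => Int.natCast_nonneg _) (mem_univ v)
  have hc1 : 1 ≤ c :=
    le_add_of_nonneg_right (sum_nonneg fun _ _ => sum_nonneg fun _ _ => Int.natCast_nonneg _)
  set φ : V → ℤ := fun v => c ^ (univ.sup t - t v)
  have hφ : ∀ v, v ≠ q → divOf m φ v ≤ -1 := by
    intro v hv
    obtain ⟨w₀, hvw₀, htw₀⟩ := ht v hv
    have hφv : 1 ≤ φ v := one_le_pow₀ hc1
    have hφw₀ : c * φ v ≤ φ w₀ := by
      rw [← pow_succ']
      exact pow_le_pow_right₀ hc1 (by have := le_sup (f := t) (mem_univ v); omega)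
    have hsplit : divOf m φ v = φ v * ∑ w, (m v w : ℤ) - ∑ w, φ w * m v w := by
      simp only [divOf, ordAt, sub_mul, sum_sub_distrib, mul_sum]
    have hw₀ : φ w₀ * m v w₀ ≤ ∑ w, φ w * m v w :=
      single_le_sum (fun w _ => mul_nonneg (pow_nonneg (by omega) _) (Int.natCast_nonneg _))
        (mem_univ w₀)
    have h₁ : φ v * ∑ w, (m v w : ℤ) ≤ φ v * (c - 1) :=
      mul_le_mul_of_nonneg_left (hc v) (by omega)
    have h₂ : φ w₀ ≤ φ w₀ * m v w₀ :=
      le_mul_of_one_le_right (pow_nonneg (by omega) _) (by exact_mod_cast hvw₀)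
    linarith
  set C : ℤ := ∑ v, |D v|
  have hC : ∀ v, -C ≤ D v := fun v =>
    (neg_le_neg (single_le_sum (fun u _ => abs_nonneg (D u)) (mem_univ v))).trans (neg_abs_le _)
  refine ⟨C • φ, fun v hv => ?_⟩
  rw [divOf_smul, Pi.smul_apply, smul_eq_mul]
  nlinarith [hφ v hv, hC v, sum_nonneg fun u (_ : u ∈ univ) => abs_nonneg (D u)]

end Firing

section ReducedDivisors

variable [DecidableEq V] (m : V → V → ℕ)

/-- Baker–Norine `q`-reduced divisors: effective off `q`, and no nonempty set avoiding `q` can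
fire without some vertex going into debt. -/
def IsReduced (q : V) (D : V → ℤ) : Prop :=
  (∀ v, v ≠ q → 0 ≤ D v) ∧
    ∀ A : Finset V, A.Nonempty → q ∉ A → ∃ v ∈ A, D v < ∑ w ∈ Aᶜ, (m v w : ℤ)

lemma divOf_indicator_of_mem {A : Finset V} {v : V} (hv : v ∈ A) :
    divOf m (fun u => if u ∈ A then 1 else 0) v = ∑ w ∈ Aᶜ, (m v w : ℤ) := by
  rw [divOf, ordAt, ← sum_add_sum_compl A]
  rw [sum_eq_zero fun w hw => by simp [hv, hw], zero_add]
  exact sum_congr rfl fun w hw => by simp [hv, mem_compl.1 hw]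

lemma divOf_indicator_nonpos_of_notMem {A : Finset V} {v : V} (hv : v ∉ A) :
    divOf m (fun u => if u ∈ A then 1 else 0) v ≤ 0 :=
  sum_nonpos fun w _ => by by_cases hw : w ∈ A <;> simp [hv, hw]

variable {m} (hsymm : ∀ v w, m v w = m w v)
include hsymm

lemma sub_le_of_divOf_le {q : V} {D f : V → ℤ} (hf : ∀ v, v ≠ q → divOf m f v ≤ D v)
    {x y : V} (hxy : 0 < m x y) (hx : f q < f x) : f x - f y ≤ ∑ u, max (D u) 0 := by
  have hD : 0 ≤ ∑ u, max (D u) 0 := sum_nonneg fun u _ => le_max_right _ _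
  by_cases hyx : f x ≤ f y
  · linarith
  set A : Finset V := univ.filter fun u => f x ≤ f u
  have hcut : ∀ v ∈ A, ∀ w ∈ Aᶜ, 0 ≤ (f v - f w) * (m v w : ℤ) := fun v hv w hw => by
    simp only [A, mem_compl, mem_filter, mem_univ, true_and] at hv hw
    exact mul_nonneg (by omega) (Int.natCast_nonneg _)
  have hxA : x ∈ A := by simp [A]
  have hyA : y ∈ Aᶜ := by simp [A]; omega
  calc f x - f y ≤ (f x - f y) * (m x y : ℤ) :=
        le_mul_of_one_le_right (by omega) (by exact_mod_cast hxy)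
    _ ≤ ∑ w ∈ Aᶜ, (f x - f w) * (m x w : ℤ) := single_le_sum (hcut x hxA) hyA
    _ ≤ ∑ v ∈ A, ∑ w ∈ Aᶜ, (f v - f w) * (m v w : ℤ) :=
        single_le_sum (fun v hv => sum_nonneg (hcut v hv)) hxA
    _ = ∑ v ∈ A, divOf m f v := (sum_divOf_eq_sum_compl hsymm A f).symm
    _ ≤ ∑ v ∈ A, max (D v) 0 := sum_le_sum fun v hv =>
        (hf v fun hvq => by simp [A, hvq] at hv; omega).trans (le_max_left _ _)
    _ ≤ ∑ u, max (D u) 0 := sum_le_sum_of_subset_of_nonneg (subset_univ A)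
        fun _ _ _ => le_max_right _ _

lemma exists_bound_of_divOf_le (hconn : Conn m) (q : V) (D : V → ℤ) (v : V) :
    ∃ B, ∀ f : V → ℤ, (∀ u, u ≠ q → divOf m f u ≤ D u) → f q = 0 → f v ≤ B := by
  have hD : 0 ≤ ∑ u, max (D u) 0 := sum_nonneg fun u _ => le_max_right _ _
  induction hconn q v with
  | refl => exact ⟨0, fun f _ hq => hq.le⟩
  | @tail b c _ hbc ih =>
    obtain ⟨B, hB⟩ := ih
    refine ⟨max B 0 + ∑ u, max (D u) 0, fun f hf hq => ?_⟩
    by_cases hc : f c ≤ 0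
    · linarith [le_max_right B 0]
    · have := sub_le_of_divOf_le hsymm hf (x := c) (y := b) (by rw [hsymm]; exact hbc) (by omega)
      linarith [hB f hf hq, le_max_left B 0]

/-- Among the firings `f` with `f q = 0` that keep `D - div f` effective off `q`, one with
maximal `∑ f` yields a reduced divisor: otherwise firing one more set would increase `∑ f`. -/
theorem exists_linEquiv_isReduced (hconn : Conn m) (q : V) (D : V → ℤ) :
    ∃ D', LinEquiv m D D' ∧ IsReduced m q D' := by
  let P : ℤ → Prop := fun s => ∃ f : V → ℤ,
    (∀ v, v ≠ q → divOf m f v ≤ D v) ∧ f q = 0 ∧ ∑ v, f v = s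
  have hP : ∃ s, P s := by
    obtain ⟨f, hf⟩ := exists_divOf_le_of_ne m hconn q D
    have hshift : divOf m (fun u => f u - f q) = divOf m f := by
      ext v; simp [divOf, ordAt]
    exact ⟨_, fun u => f u - f q, by rwa [hshift], sub_self _, rfl⟩
  have hbdd : ∃ b, ∀ s, P s → s ≤ b := by
    choose B hB using exists_bound_of_divOf_le hsymm hconn q D
    exact ⟨∑ v, B v, fun s ⟨f, hf, hq, hs⟩ => hs ▸ sum_le_sum fun v _ => hB v f hf hq⟩
  obtain ⟨s, ⟨f, hf, hq, rfl⟩, hmax⟩ := Int.exists_greatest_of_bdd hbdd hP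
  refine ⟨D - divOf m f, ⟨f, sub_sub_cancel _ _⟩,
    fun v hv => sub_nonneg.2 (hf v hv), fun A hA hqA => ?_⟩
  by_contra! hfire
  set χ : V → ℤ := fun u => if u ∈ A then 1 else 0
  have hχ : ∀ v, v ≠ q → divOf m (f + χ) v ≤ D v := fun v hv => by
    rw [divOf_add, Pi.add_apply]
    by_cases hvA : v ∈ A
    · have := hfire v hvA
      rw [divOf_indicator_of_mem m hvA]
      simp only [Pi.sub_apply] at this
      linarith
    · linarith [hf v hv, divOf_indicator_nonpos_of_notMem m hvA]
  have := hmax _ ⟨f + χ, hχ, by simp [χ, hq, hqA], rfl⟩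
  have hsum : ∑ v, (f + χ) v = ∑ v, f v + A.card := by
    simp [χ, sum_add_distrib, sum_ite_mem]
  linarith [card_pos.2 hA]

end ReducedDivisors

section Orientations

variable (m : V → V → ℕ)

def canonicalDiv (v : V) : ℤ := ∑ w, (m v w : ℤ) - 2

/-- The divisor `ν_ι` of the acyclic orientation in which every edge points from the `ι`-earlier
to the `ι`-later endpoint. -/
def orientationDiv {α : Type*} [LinearOrder α] (ι : V → α) (v : V) : ℤ :=
  ∑ w ∈ univ.filter (fun w => ι w < ι v), (m v w : ℤ) - 1

lemma degOf_canonicalDiv :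
    degOf (canonicalDiv m) = ∑ v, ∑ w, (m v w : ℤ) - 2 * Fintype.card V := by
  simp [degOf, canonicalDiv, sum_sub_distrib, mul_comm]

variable {α : Type*} [LinearOrder α] {ι : V → α}

lemma orientationDiv_add_orientationDiv_toDual (hloop : ∀ v, m v v = 0)
    (hι : Function.Injective ι) :
    orientationDiv m ι + orientationDiv m (OrderDual.toDual ∘ ι) = canonicalDiv m := by
  ext v
  have hsplit : ∀ w,
      ((if ι w < ι v then (m v w : ℤ) else 0) + if ι v < ι w then (m v w : ℤ) else 0) = m v w :=
    fun w => by
      rcases lt_trichotomy (ι w) (ι v) with h | h | h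
      · simp [h, h.not_gt]
      · simp [hι h, hloop]
      · simp [h, h.not_gt]
  simp only [orientationDiv, canonicalDiv, Pi.add_apply, Function.comp_apply,
    OrderDual.toDual_lt_toDual, sum_filter]
  rw [← sum_congr rfl fun w _ => hsplit w, sum_add_distrib]
  ring

lemma two_mul_degOf_orientationDiv (hsymm : ∀ v w, m v w = m w v) (hloop : ∀ v, m v v = 0)
    (hι : Function.Injective ι) :
    2 * (degOf (orientationDiv m ι) + Fintype.card V) = ∑ v, ∑ w, (m v w : ℤ) := by
  have hrev : degOf (orientationDiv m ι) = degOf (orientationDiv m (OrderDual.toDual ∘ ι)) := by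
    simp only [degOf, orientationDiv, sum_sub_distrib, Function.comp_apply,
      OrderDual.toDual_lt_toDual, sum_filter]
    rw [sum_comm]
    simp only [hsymm _ _]
  have := congrArg degOf (orientationDiv_add_orientationDiv_toDual m hloop hι)
  rw [degOf_add, degOf_canonicalDiv, ← hrev] at this
  linarith

/-- Let `v` be the `ι`-first vertex where `f` is maximal: every edge from an earlier vertex
contributes at least one to `div f (v)`, so `ν_ι - div f` is negative at `v`. -/
lemma not_linEquiv_effective_orientationDiv [Nonempty V] (ι : V → α) :
    ¬ ∃ E, 0 ≤ E ∧ LinEquiv m (orientationDiv m ι) E := by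
  rintro ⟨E, hE, f, hf⟩
  obtain ⟨z, -, hz⟩ := exists_max_image univ f univ_nonempty
  obtain ⟨v, hvB, hv⟩ := exists_min_image (univ.filter fun u => f u = f z) ι ⟨z, by simp⟩
  have hfv : f v = f z := (mem_filter.1 hvB).2
  have hearly : ∀ w, ι w < ι v → (m v w : ℤ) ≤ (f v - f w) * m v w := fun w hw => by
    have : f w ≠ f z := fun h => (hv w (by simp [h])).not_gt hw
    exact le_mul_of_one_le_left (Int.natCast_nonneg _) (by have := hz w (mem_univ w); omega)
  have hdiv : orientationDiv m ι v + 1 ≤ divOf m f v := by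
    rw [orientationDiv, divOf, ordAt, ← sum_filter_add_sum_filter_not univ fun w => ι w < ι v]
    have hlate : 0 ≤ ∑ w ∈ univ.filter (fun w => ¬ ι w < ι v), (f v - f w) * (m v w : ℤ) :=
      sum_nonneg fun w _ => mul_nonneg (by have := hz w (mem_univ w); omega) (Int.natCast_nonneg _)
    linarith [sum_le_sum (s := univ.filter fun w => ι w < ι v)
      fun w hw => hearly w (mem_filter.1 hw).2]
  have := congrFun hf v
  have := hE v
  simp only [Pi.sub_apply, Pi.zero_apply] at *
  omega

variable [DecidableEq V]

/-- Dhar's burning algorithm: `ι` orders the vertices by the time at which a fire started at `q`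
reaches them. -/
theorem exists_le_orientationDiv_of_isReduced {q : V} {D : V → ℤ} (hred : IsReduced m q D)
    (hq : D q < 0) : ∃ ι : V → ℕ ×ₗ Fin (Fintype.card V),
      Function.Injective ι ∧ D ≤ orientationDiv m ι := by
  obtain ⟨t, ht⟩ := exists_peeling_order (fun v B => D v < ∑ w ∈ B, (m v w : ℤ))
    (fun _ _ _ hB h => h.trans_le (sum_le_sum_of_subset_of_nonneg hB
      fun _ _ _ => Int.natCast_nonneg _)) (univ.erase q)
    fun A' hA' hne => hred.2 A' hne fun hqA => by simpa using hA' hqA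
  let ι : V → ℕ ×ₗ Fin (Fintype.card V) := fun v => toLex (t v, Fintype.equivFin V v)
  have hι : Function.Injective ι := fun v w h =>
    (Fintype.equivFin V).injective (Prod.ext_iff.1 (toLex.injective h)).2
  refine ⟨ι, hι, fun v => ?_⟩
  have hsum : 0 ≤ ∑ w ∈ univ.filter (fun w => ι w < ι v), (m v w : ℤ) :=
    sum_nonneg fun _ _ => Int.natCast_nonneg _
  by_cases hv : v = q
  · subst hv
    simp only [orientationDiv]
    omega
  · have hsub : univ.filter (fun w => t w < t v) ⊆ univ.filter (fun w => ι w < ι v) :=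
      fun w hw => by
        simp only [mem_filter, mem_univ, true_and] at hw ⊢
        exact Prod.Lex.toLex_lt_toLex.2 (Or.inl hw)
    have := (ht v (mem_erase.2 ⟨hv, mem_univ v⟩)).trans_le
      (sum_le_sum_of_subset_of_nonneg hsub fun _ _ _ => Int.natCast_nonneg _)
    simp only [orientationDiv]
    omega

end Orientations

section RiemannRoch

variable {m : V → V → ℕ} (hsymm : ∀ v w, m v w = m w v)
include hsymm

theorem exists_linEquiv_le_orientationDiv [Nonempty V] (hconn : Conn m) {D : V → ℤ}
    (hD : ¬ ∃ E, 0 ≤ E ∧ LinEquiv m D E) : ∃ ι : V → ℕ ×ₗ Fin (Fintype.card V),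
      Function.Injective ι ∧ ∃ D', LinEquiv m D D' ∧ D' ≤ orientationDiv m ι := by
  classical
  let q : V := Classical.arbitrary V
  obtain ⟨D', hDD', hred⟩ := exists_linEquiv_isReduced hsymm hconn q D
  have hq : D' q < 0 := by
    by_contra! h
    exact hD ⟨D', fun v => if hv : v = q then hv ▸ h else hred.1 v hv, hDD'⟩
  obtain ⟨ι, hι, hle⟩ := exists_le_orientationDiv_of_isReduced m hred hq
  exact ⟨ι, hι, D', hDD', hle⟩

variable (hloop : ∀ v, m v v = 0) (hconn : Conn m) (g : ℤ)
  (hg : 2 * (g + Fintype.card V - 1) = ∑ v, ∑ w, (m v w : ℤ))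
include hloop hconn hg

/-- Otherwise some effective `e` of degree `deg d - g + 1 + r(K - d)` would leave `d - e`
equivalent to some `D' ≤ ν_ι`; then `ν_ι - D'` has degree `r(K - d)`, and removing it from
`K - d` exhibits the reversed orientation divisor as equivalent to an effective divisor. -/
theorem degOf_sub_add_bnRank_le_bnRank [Nonempty V] (d : V → ℤ) :
    degOf d - g + 1 + bnRank m (canonicalDiv m - d) ≤ bnRank m d := by
  set r' := bnRank m (canonicalDiv m - d)
  set s := degOf d - g + 1 + r'
  rcases lt_or_ge s 0 with hs | hs
  · linarith [neg_one_le_bnRank hsymm (m := m) d]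
  rw [← Int.toNat_of_nonneg hs, natCast_le_bnRank_iff hsymm]
  intro e he hdeg
  rw [Int.toNat_of_nonneg hs] at hdeg
  by_contra! hdom
  have hne : ¬ ∃ E, 0 ≤ E ∧ LinEquiv m (d - e) E := fun ⟨E, hE, hlin⟩ => by
    obtain ⟨v, hv⟩ := hdom (E + e) <| (linEquiv_iff_sub_mem m).2 <| by
      convert (linEquiv_iff_sub_mem m).1 hlin using 1
      abel
    have := hE v
    simp only [Pi.add_apply, Pi.zero_apply] at hv this
    omega
  obtain ⟨ι, hι, D', hD', hle⟩ := exists_linEquiv_le_orientationDiv hsymm hconn hne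
  have hdeg' : degOf (orientationDiv m ι - D') = r' := by
    have := two_mul_degOf_orientationDiv m hsymm hloop hι
    have := LinEquiv.degOf_eq hsymm hD'
    simp only [degOf_sub] at this ⊢
    omega
  have hr' : 0 ≤ r' := hdeg' ▸ degOf_nonneg (sub_nonneg.2 hle)
  obtain ⟨X, hX, hleX⟩ := (natCast_le_bnRank_iff hsymm).1 (Int.toNat_of_nonneg hr').le
    (orientationDiv m ι - D') (sub_nonneg.2 hle) (by rw [hdeg', Int.toNat_of_nonneg hr'])
  refine not_linEquiv_effective_orientationDiv m (OrderDual.toDual ∘ ι)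
    ⟨X - (orientationDiv m ι - D') + e, fun v => ?_, ?_⟩
  · have := hleX v
    have := he v
    simp only [Pi.add_apply, Pi.sub_apply, Pi.zero_apply] at *
    omega
  · rw [linEquiv_iff_sub_mem] at hX hD' ⊢
    convert add_mem hX hD' using 1
    rw [← orientationDiv_add_orientationDiv_toDual m hloop hι]
    abel

theorem bnRank_canonicalDiv_le [Nonempty V] : bnRank m (canonicalDiv m) ≤ g - 1 := by
  have hRR := degOf_sub_add_bnRank_le_bnRank hsymm hloop hconn g hg 0
  rw [sub_zero, degOf_zero] at hRR
  have h0 : bnRank m 0 ≤ 0 := by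
    by_contra! h
    have := bnRank_le_degOf hsymm h.le
    simp only [degOf_zero] at this
    omega
  omega

end RiemannRoch

end ChipFiring

open ChipFiring in
theorem clifford_for_graphs_general {V : Type*} [Fintype V] (m : V → V → ℕ)
    (hsymm : ∀ v w, m v w = m w v) (hloop : ∀ v, m v v = 0) (hconn : Conn m)
    (g : ℤ) (hg : 2 * (g + Fintype.card V - 1) = ∑ v, ∑ w, (m v w : ℤ))
    (d : V → ℤ) (h2 : degOf d ≤ 2 * g - 2)
    (hr : 0 ≤ bnRank m d) :
    2 * bnRank m d ≤ degOf d := by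
  rcases isEmpty_or_nonempty V with hV | hV
  · simp [bnRank_of_isEmpty, degOf]
  have hK : degOf (canonicalDiv m) = 2 * g - 2 := by
    rw [degOf_canonicalDiv]
    linarith
  have hRR := degOf_sub_add_bnRank_le_bnRank hsymm hloop hconn g hg (canonicalDiv m - d)
  rw [sub_sub_cancel, degOf_sub, hK] at hRR
  have hrK := bnRank_canonicalDiv_le hsymm hloop hconn g hg
  rcases lt_or_ge (bnRank m (canonicalDiv m - d)) 0 with hr' | hr'
  · omega
  · have := add_bnRank_le_bnRank_add hsymm hr hr'
    rw [add_sub_cancel] at this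
    omega

/-- Clifford's theorem for graphs: for a loopless weightless connected graph of
genus `g` and a divisor `d` with `0 ≤ deg d ≤ 2g − 2` and `r_G(d) ≥ 0`, one has
`r_G(d) ≤ (deg d)/2`. -/
theorem clifford_for_graphs {V : Type*} [Fintype V] (m : V → V → ℕ)
    (hsymm : ∀ v w, m v w = m w v) (hloop : ∀ v, m v v = 0) (hconn : Conn m)
    (g : ℤ) (hg : 2 * (g + Fintype.card V - 1) = ∑ v, ∑ w, (m v w : ℤ))
    (d : V → ℤ) (h0 : 0 ≤ degOf d) (h2 : degOf d ≤ 2 * g - 2)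
    (hr : 0 ≤ bnRank m d) :
    2 * bnRank m d ≤ degOf d :=
  clifford_for_graphs_general m hsymm hloop hconn g hg d h2 hr
end

section
/- On the binary graph G of genus g ≥ 2 (two vertices joined by g+1 edges), the divisor (1,1) has combinatorial rank 1. -/
open Finset

section aux

variable (g : ℕ)

/-- Divisor of a function on the binary graph. -/
lemma divOf_binary (f : Fin 2 → ℤ) :
    divOf (fun v w : Fin 2 => if v = w then 0 else g + 1) f =
      fun v => if v = 0 then (f 0 - f 1) * (g + 1) else (f 1 - f 0) * (g + 1) := by
  funext v
  fin_cases v <;> simp [divOf, ordAt, Fin.sum_univ_two]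

lemma linEquiv_binary (d' : Fin 2 → ℤ)
    (h : LinEquiv (fun v w : Fin 2 => if v = w then 0 else g + 1) (fun _ => (1:ℤ)) d') :
    ∃ t : ℤ, d' 0 = 1 - t * (g + 1) ∧ d' 1 = 1 + t * (g + 1) := by
  obtain ⟨f, hf⟩ := h
  rw [divOf_binary] at hf
  refine ⟨f 0 - f 1, ?_, ?_⟩
  · have := congrFun hf 0
    simp at this
    linarith
  · have := congrFun hf 1
    simp at this
    linarith

end aux

/-- On the binary graph of genus `g ≥ 2` (two vertices joined by `g+1` edges),
the divisor `(1,1)` has combinatorial rank `1`. -/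
theorem binary_graph_rank_one (g : ℕ) (hg : 2 ≤ g) :
    bnRank (fun v w : Fin 2 => if v = w then 0 else g + 1)
      (fun _ => (1 : ℤ)) = 1 := by
  set m : Fin 2 → Fin 2 → ℕ := fun v w => if v = w then 0 else g + 1 with hm
  have hself : LinEquiv m (fun _ => (1:ℤ)) (fun _ => (1:ℤ)) := by
    refine ⟨fun _ => 0, ?_⟩
    funext v
    simp [divOf, ordAt]
  apply IsGreatest.csSup_eq
  constructor
  · -- 1 is in the set
    right
    refine ⟨by norm_num, ?_⟩
    intro e he hdeg
    have hsum : e 0 + e 1 = 1 := by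
      simpa [degOf, Fin.sum_univ_two] using hdeg
    refine ⟨fun _ => 1, hself, ?_⟩
    intro v
    have h0 := he 0
    have h1 := he 1
    fin_cases v <;> simp <;> linarith
  · -- upper bound
    rintro x (hx | ⟨hx0, hx⟩)
    · simp at hx; omega
    · by_contra hlt
      push_neg at hlt
      have hx2 : (2:ℤ) ≤ x := by omega
      have hdeg : degOf (fun v : Fin 2 => if v = 0 then x else 0) = (x.toNat : ℤ) := by
        simp [degOf, Fin.sum_univ_two]
        omega
      obtain ⟨d', hd', hdom⟩ := hx (fun v : Fin 2 => if v = 0 then x else 0)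
        (by intro v; fin_cases v <;> simp <;> omega) hdeg
      obtain ⟨t, h0, h1⟩ := linEquiv_binary g d' hd'
      have hd0 := hdom 0
      have hd1 := hdom 1
      simp at hd0 hd1
      -- d' 1 ≥ 0 ⇒ t ≥ 0 ; d' 0 ≥ 2 ⇒ t*(g+1) ≤ -1
      have hg3 : (3:ℤ) ≤ (g:ℤ) + 1 := by exact_mod_cast by omega
      rcases le_or_gt 0 t with ht | ht
      · nlinarith
      · have : t ≤ -1 := by omega
        nlinarith
end

section
/- On a graph with a single vertex v of weight h and g − h loops attached to v (0 ≤ h ≤ g, g ≥ 2), the divisor d·v with 0 ≤ d ≤ 2g − 2 has combinatorial rank ⌊d/2⌋. -/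
open Finset

/-- The weightless loopless model `G•` of the graph with one vertex and `g` loops
(counting weight): a central vertex `none` joined to each of `g` outer vertices by
a double edge. -/
def oneVertexModel (g : ℕ) : Option (Fin g) → Option (Fin g) → ℕ :=
  fun x y => match x, y with
    | none, some _ => 2
    | some _, none => 2
    | _, _ => 0

/-
On the model `G•`, passing from `D` to `D - div f` moves `2 (f(centre) - f(i))` chips from the
centre to the outer vertex `i`. To dominate an effective divisor `e` of degree `k ≤ d/2`, take
`f = -e` on the outer vertices and `0` at the centre: the centre keeps at least
`d - 2(k - e(centre)) ≥ e(centre)` chips. Conversely, since the chips received by an outer vertex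
are even in number, putting a chip on each of `K` distinct outer vertices costs the centre at
least `2K` chips, which is more than `d` when `K = ⌊d/2⌋ + 1 ≤ g`.
-/

section Rank

variable {V : Type*} [Fintype V] {m : V → V → ℕ} {D : V → ℤ}

lemma LinEquiv.exists_eq_sub_divOf {D' : V → ℤ} (h : LinEquiv m D D') :
    ∃ f, D' = D - divOf m f := by
  obtain ⟨f, hf⟩ := h
  exact ⟨f, by rw [← hf, sub_sub_cancel]⟩

lemma rankGE.mono [Nonempty V] {j k : ℕ} (h : rankGE m D k) (hjk : j ≤ k) : rankGE m D j := by
  classical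
  intro e he hdeg
  obtain ⟨v₀⟩ := ‹Nonempty V›
  have hpad : 0 ≤ Pi.single (M := fun _ => ℤ) v₀ ((k : ℤ) - j) := by
    rw [Pi.single_nonneg]; omega
  obtain ⟨D', hD', hdom⟩ := h (e + Pi.single v₀ ((k : ℤ) - j))
    (fun v => add_nonneg (he v) (hpad v))
    (by simp only [degOf] at hdeg; simp [degOf, Finset.sum_add_distrib, hdeg])
  exact ⟨D', hD', fun v => (le_add_of_nonneg_right (hpad v)).trans (hdom v)⟩

lemma bnRank_eq_of_rankGE [Nonempty V] {r : ℤ} (hr : -1 ≤ r)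
    (hle : ∀ k : ℕ, (k : ℤ) ≤ r → rankGE m D k) (hnot : ¬ rankGE m D (r + 1).toNat) :
    bnRank m D = r := by
  have hset : {-1} ∪ {k : ℤ | 0 ≤ k ∧ rankGE m D k.toNat} = Set.Icc (-1) r := by
    ext x
    constructor
    · rintro (rfl | ⟨hx, hxD⟩)
      · exact ⟨le_rfl, hr⟩
      · refine ⟨by omega, not_lt.mp fun hrx => hnot (hxD.mono ?_)⟩
        omega
    · rintro ⟨h₁, h₂⟩
      rcases h₁.eq_or_lt with rfl | hx
      · exact Or.inl rfl
      · exact Or.inr ⟨by omega, hle _ (by omega)⟩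
  rw [bnRank, hset, csSup_Icc hr]

end Rank

section OneVertexModel

variable {g : ℕ}

lemma divOf_oneVertexModel_none (f : Option (Fin g) → ℤ) :
    divOf (oneVertexModel g) f none = 2 * ∑ i, (f none - f (some i)) := by
  rw [divOf, ordAt, Fintype.sum_option, Finset.mul_sum]
  simp [oneVertexModel, mul_comm]

lemma divOf_oneVertexModel_some (f : Option (Fin g) → ℤ) (i : Fin g) :
    divOf (oneVertexModel g) f (some i) = 2 * (f (some i) - f none) := by
  simp [divOf, ordAt, Fintype.sum_option, oneVertexModel, mul_comm]

lemma oneVertexModel_rankGE {d : ℤ} {k : ℕ} (hk : 2 * (k : ℤ) ≤ d) :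
    rankGE (oneVertexModel g) (fun x => if x = none then d else 0) k := by
  intro e he hdeg
  let f : Option (Fin g) → ℤ := fun x => x.elim 0 fun i => -e (some i)
  refine ⟨_ - divOf (oneVertexModel g) f, ⟨f, sub_sub_cancel _ _⟩, ?_⟩
  have hdeg' : e none + ∑ i, e (some i) = k := by
    rwa [degOf, Fintype.sum_option] at hdeg
  rintro (_ | i)
  · have := he none
    simp only [f, Pi.sub_apply, ↓reduceIte, divOf_oneVertexModel_none, Option.elim_none,
      Option.elim_some, sub_neg_eq_add, zero_add]
    omega
  · have := he (some i)
    simp only [f, Pi.sub_apply, reduceCtorEq, ↓reduceIte, divOf_oneVertexModel_some,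
      Option.elim_none, Option.elim_some]
    omega

lemma oneVertexModel_not_rankGE {d : ℤ} {K : ℕ} (hKg : K ≤ g) (hK : d < 2 * (K : ℤ)) :
    ¬ rankGE (oneVertexModel g) (fun x => if x = none then d else 0) K := by
  intro hrank
  obtain ⟨s, -, hs⟩ := Finset.exists_subset_card_eq (s := (Finset.univ : Finset (Fin g)))
    (by simpa using hKg)
  let e : Option (Fin g) → ℤ := fun x => x.elim 0 fun i => if i ∈ s then 1 else 0
  have he : ∀ v, 0 ≤ e v := by
    rintro (_ | i)
    · exact le_rfl
    · simp only [e, Option.elim_some]; split <;> omega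
  have hdeg : degOf e = K := by
    simp [degOf, Fintype.sum_option, e, hs]
  obtain ⟨D', hequiv, hdom⟩ := hrank e he hdeg
  obtain ⟨f, rfl⟩ := hequiv.exists_eq_sub_divOf
  have hgain : ∀ i, e (some i) ≤ f none - f (some i) := by
    intro i
    have h₁ := hdom (some i)
    have h₂ : e (some i) ≤ 1 := by simp only [e, Option.elim_some]; split <;> omega
    simp only [Pi.sub_apply, divOf_oneVertexModel_some, reduceCtorEq, if_false] at h₁
    omega
  have hsum : (K : ℤ) ≤ ∑ i, (f none - f (some i)) := by
    calc (K : ℤ) = ∑ i, e (some i) := by simp [e, hs]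
      _ ≤ _ := Finset.sum_le_sum fun i _ => hgain i
  have hcentre := hdom none
  simp only [Pi.sub_apply, divOf_oneVertexModel_none, if_true] at hcentre
  have := he none
  omega

end OneVertexModel

theorem one_vertex_graph_rank_general (g : ℕ)
    (d : ℤ) (hd0 : 0 ≤ d) (hd2 : d ≤ 2 * (g : ℤ) - 2) :
    bnRank (oneVertexModel g)
      (fun x : Option (Fin g) => if x = none then d else 0) = d / 2 := by
  refine bnRank_eq_of_rankGE (by omega) (fun k hk => oneVertexModel_rankGE (by omega)) ?_
  exact oneVertexModel_not_rankGE (by omega) (by omega)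

/-- On a graph with a single vertex `v` of weight `h` and `g − h` loops at `v`
(`0 ≤ h ≤ g`, `g ≥ 2`), the divisor `d·v` with `0 ≤ d ≤ 2g − 2` has combinatorial
rank `⌊d/2⌋`; the rank is computed on the weightless loopless model `G•`. -/
theorem one_vertex_graph_rank (g h : ℕ) (hg : 2 ≤ g) (hh : h ≤ g)
    (d : ℤ) (hd0 : 0 ≤ d) (hd2 : d ≤ 2 * (g : ℤ) - 2) :
    bnRank (oneVertexModel g)
      (fun x : Option (Fin g) => if x = none then d else 0) = d / 2 :=
  one_vertex_graph_rank_general g d hd0 hd2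
end
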